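/- arXiv:2406.14000 — 4 statements merged into one kernel-verified Lean document; each statement's English description precedes it below -/
import Mathlib

section
/- Let D > 0, γ > D^(3/2) + D + 1/2, and ε satisfy (2/3)·D^(3/2)/(γ - 1/2 - D) < ε < 2/3. Then for all x₁, x₂, d ∈ ℝ with x₁ ≠ 0 and |d| ≤ D, the quantity W := -(γ - sign(x₁)·d)·ε·√|x₁|·|x₁| - |x₂|³ + ε·√|x₁|·x₂²·(1/2 - sign(x₁)·sign(x₂)) + |x₁|·x₂·d satisfies W ≤ -[ε·(γ - 1/2 - D) - (2/3)·D^(3/2)]·√|x₁|·|x₁| - (2/3 - ε)·|x₂|³, and in particular W < 0 whenever (x₁, x₂) ≠ (0, 0). -/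
/-!
Write `s = √|x₁|`, `y = |x₂|`, so that `|x₁| = s²`. Since `|sign x₁ · d| ≤ D` and
`sign x₁ · sign x₂ ≥ -1`, the derivative is at most
`-(γ - D) ε s³ - y³ + (3/2) ε s y² + D s² y`. The two cross terms are absorbed by
the cubic AM-GM (Young) inequality `a b² ≤ a³/3 + 2b³/3`: once with `(a, b) = (s, y)`, and once
with `(a, b) = (y, √D s)`, which is where `D^(3/2)` enters. The hypotheses on `γ` and `ε` make
both resulting coefficients negative.
-/

open Real

lemma mul_le_abs_mul_of_abs_le {a b c : ℝ} (hb : |b| ≤ c) : a * b ≤ |a| * c :=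
  (le_abs_self _).trans ((abs_mul a b).trans_le (mul_le_mul_of_nonneg_left hb (abs_nonneg a)))

lemma mul_le_of_abs_le_one {a b c : ℝ} (ha : |a| ≤ 1) (hb : |b| ≤ c) : a * b ≤ c :=
  (mul_le_abs_mul_of_abs_le hb).trans (mul_le_of_le_one_left ((abs_nonneg b).trans hb) ha)

lemma Real.abs_sign_le_one (r : ℝ) : |sign r| ≤ 1 := by
  rcases sign_apply_eq r with h | h | h <;> simp [h]

lemma mul_sq_le_cube_add_cube {a b : ℝ} (ha : 0 ≤ a) (hb : 0 ≤ b) :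
    a * b ^ 2 ≤ a ^ 3 / 3 + 2 * b ^ 3 / 3 := by
  nlinarith [mul_nonneg (sq_nonneg (a - b)) (add_nonneg ha (mul_nonneg zero_le_two hb))]

lemma Real.rpow_three_halves {x : ℝ} (hx : 0 ≤ x) : x ^ ((3 : ℝ) / 2) = √x ^ 3 := by
  rw [rpow_div_two_eq_sqrt 3 hx]
  norm_cast

noncomputable def lyapunovDerivative (γ ε x₁ x₂ d : ℝ) : ℝ :=
  -(γ - sign x₁ * d) * ε * √|x₁| * |x₁| - |x₂| ^ 3
    + ε * √|x₁| * x₂ ^ 2 * (1 / 2 - sign x₁ * sign x₂) + |x₁| * x₂ * d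

theorem lyapunovDerivative_le {D γ ε d : ℝ} (x₁ x₂ : ℝ) (hD : 0 ≤ D) (hε : 0 ≤ ε)
    (hd : |d| ≤ D) :
    lyapunovDerivative γ ε x₁ x₂ d ≤
      -(ε * (γ - 1 / 2 - D) - (2 / 3) * D ^ ((3 : ℝ) / 2)) * √|x₁| * |x₁|
        - (2 / 3 - ε) * |x₂| ^ 3 := by
  rw [lyapunovDerivative, rpow_three_halves hD]
  set s := √|x₁|
  set y := |x₂|
  have hs : 0 ≤ s := sqrt_nonneg _
  have hy : 0 ≤ y := abs_nonneg _
  rw [← sq_sqrt (abs_nonneg x₁), ← sq_abs x₂]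
  have hsign_d : ε * s ^ 3 * (sign x₁ * d) ≤ ε * s ^ 3 * D :=
    mul_le_mul_of_nonneg_left (mul_le_of_abs_le_one (abs_sign_le_one x₁) hd) (by positivity)
  have hsign_sign : ε * s * y ^ 2 * (-sign x₁ * sign x₂) ≤ ε * s * y ^ 2 :=
    mul_le_of_le_one_right (by positivity)
      (mul_le_of_abs_le_one (by rw [abs_neg]; exact abs_sign_le_one x₁) (abs_sign_le_one x₂))
  have hx₂d : s ^ 2 * (x₂ * d) ≤ s ^ 2 * (y * D) :=
    mul_le_mul_of_nonneg_left (mul_le_abs_mul_of_abs_le hd) (sq_nonneg s)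
  have young₁ : ε * (s * y ^ 2) ≤ ε * (s ^ 3 / 3 + 2 * y ^ 3 / 3) :=
    mul_le_mul_of_nonneg_left (mul_sq_le_cube_add_cube hs hy) hε
  have young₂ : y * (D * s ^ 2) ≤ y ^ 3 / 3 + 2 * (√D * s) ^ 3 / 3 := by
    simpa only [mul_pow, sq_sqrt hD] using
      mul_sq_le_cube_add_cube hy (mul_nonneg (sqrt_nonneg D) hs)
  linear_combination hsign_d + hsign_sign + hx₂d + (3 / 2) * young₁ + young₂

theorem lyapunov_derivative_estimate_general (D γ ε : ℝ)
    (hγ : D ^ ((3 : ℝ) / 2) + D + 1 / 2 < γ)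
    (hε₁ : (2 / 3) * D ^ ((3 : ℝ) / 2) / (γ - 1 / 2 - D) < ε) (hε₂ : ε < 2 / 3) :
    ∀ x₁ x₂ d : ℝ, x₁ ≠ 0 → |d| ≤ D →
      (-(γ - Real.sign x₁ * d) * ε * Real.sqrt |x₁| * |x₁| - |x₂| ^ 3
          + ε * Real.sqrt |x₁| * x₂ ^ 2 * (1 / 2 - Real.sign x₁ * Real.sign x₂)
          + |x₁| * x₂ * d
        ≤ -(ε * (γ - 1 / 2 - D) - (2 / 3) * D ^ ((3 : ℝ) / 2)) * Real.sqrt |x₁| * |x₁|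
          - (2 / 3 - ε) * |x₂| ^ 3) ∧
      ((x₁, x₂) ≠ (0, 0) →
        -(γ - Real.sign x₁ * d) * ε * Real.sqrt |x₁| * |x₁| - |x₂| ^ 3
          + ε * Real.sqrt |x₁| * x₂ ^ 2 * (1 / 2 - Real.sign x₁ * Real.sign x₂)
          + |x₁| * x₂ * d < 0) := by
  intro x₁ x₂ d hx₁ hd
  have hD : 0 ≤ D := (abs_nonneg d).trans hd
  have hγD : 0 < γ - 1 / 2 - D := by linarith [rpow_nonneg hD ((3 : ℝ) / 2)]
  have hε : 0 ≤ ε := (div_nonneg (by positivity) hγD.le).trans hε₁.le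
  have hW := lyapunovDerivative_le (γ := γ) x₁ x₂ hD hε hd
  refine ⟨hW, fun _ => hW.trans_lt ?_⟩
  have hc : 0 < ε * (γ - 1 / 2 - D) - 2 / 3 * D ^ ((3 : ℝ) / 2) := by
    linarith [(div_lt_iff₀ hγD).mp hε₁]
  have hx₁_term :
      0 < (ε * (γ - 1 / 2 - D) - 2 / 3 * D ^ ((3 : ℝ) / 2)) * √|x₁| * |x₁| := by
    positivity
  have hx₂_term : 0 ≤ (2 / 3 - ε) * |x₂| ^ 3 := mul_nonneg (by linarith) (by positivity)
  linarith

theorem lyapunov_derivative_estimate (D γ ε : ℝ) (hD : 0 < D)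
    (hγ : D ^ ((3 : ℝ) / 2) + D + 1 / 2 < γ)
    (hε₁ : (2 / 3) * D ^ ((3 : ℝ) / 2) / (γ - 1 / 2 - D) < ε) (hε₂ : ε < 2 / 3) :
    ∀ x₁ x₂ d : ℝ, x₁ ≠ 0 → |d| ≤ D →
      (-(γ - Real.sign x₁ * d) * ε * Real.sqrt |x₁| * |x₁| - |x₂| ^ 3
          + ε * Real.sqrt |x₁| * x₂ ^ 2 * (1 / 2 - Real.sign x₁ * Real.sign x₂)
          + |x₁| * x₂ * d
        ≤ -(ε * (γ - 1 / 2 - D) - (2 / 3) * D ^ ((3 : ℝ) / 2)) * Real.sqrt |x₁| * |x₁|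
          - (2 / 3 - ε) * |x₂| ^ 3) ∧
      ((x₁, x₂) ≠ (0, 0) →
        -(γ - Real.sign x₁ * d) * ε * Real.sqrt |x₁| * |x₁| - |x₂| ^ 3
          + ε * Real.sqrt |x₁| * x₂ ^ 2 * (1 / 2 - Real.sign x₁ * Real.sign x₂)
          + |x₁| * x₂ * d < 0) :=
  lyapunov_derivative_estimate_general D γ ε hγ hε₁ hε₂
end

section
/- Let κ > 0 and let V : [t₀, ∞) → ℝ be a nonnegative, continuously differentiable function satisfying V'(t) ≤ -κ·√(V(t)) for all t ≥ t₀. Then V(t) = 0 for all t ≥ t₀ + 2·√(V(t₀))/κ. -/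
/-!
While `V > 0`, the chain rule gives `(√V)' = V' / (2√V) ≤ -κ/2`, so `√V(t) + κ t / 2` is
nonincreasing and `√V` reaches `0` by time `t₀ + 2√V(t₀)/κ`. Since `V' ≤ 0`, `V` is
nonincreasing, so if `V(t) > 0` then `V > 0` on all of `[t₀, t]` and the first estimate applies
there, contradicting `√V(t) > 0`.
-/

open Set

lemma antitoneOn_of_hasDerivAt_le_neg_mul_sqrt {D : Set ℝ} (hD : Convex ℝ D) {V V' : ℝ → ℝ}
    {κ : ℝ} (hκ : 0 ≤ κ) (hcont : ContinuousOn V D)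
    (hderiv : ∀ t ∈ interior D, HasDerivAt V (V' t) t)
    (hineq : ∀ t ∈ interior D, V' t ≤ -κ * √(V t)) :
    AntitoneOn V D :=
  antitoneOn_of_hasDerivWithinAt_nonpos hD hcont
    (fun t ht => (hderiv t ht).hasDerivWithinAt)
    (fun t ht => (hineq t ht).trans <|
      mul_nonpos_of_nonpos_of_nonneg (neg_nonpos.2 hκ) (Real.sqrt_nonneg _))

lemma antitoneOn_sqrt_add_mul_of_hasDerivAt_le_neg_mul_sqrt {D : Set ℝ} (hD : Convex ℝ D)
    {V V' : ℝ → ℝ} {κ : ℝ} (hcont : ContinuousOn V D)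
    (hderiv : ∀ t ∈ interior D, HasDerivAt V (V' t) t)
    (hpos : ∀ t ∈ interior D, 0 < V t)
    (hineq : ∀ t ∈ interior D, V' t ≤ -κ * √(V t)) :
    AntitoneOn (fun t => √(V t) + κ / 2 * t) D := by
  refine antitoneOn_of_hasDerivWithinAt_nonpos hD
    ((Real.continuous_sqrt.comp_continuousOn hcont).add (continuousOn_const.mul continuousOn_id))
    (fun t ht => ((((hderiv t ht).sqrt (hpos t ht).ne').add
      ((hasDerivAt_id t).const_mul (κ / 2))).hasDerivWithinAt)) fun t ht => ?_
  have hsqrt : 0 < 2 * √(V t) := by have := Real.sqrt_pos.2 (hpos t ht); positivity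
  have : V' t / (2 * √(V t)) ≤ -κ / 2 := by
    rw [div_le_iff₀ hsqrt]
    linarith [hineq t ht]
  linarith

theorem finite_time_convergence_general (κ t₀ : ℝ) (hκ : 0 < κ) (V V' : ℝ → ℝ)
    (hVnonneg : ∀ t, t₀ ≤ t → 0 ≤ V t)
    (hderiv : ∀ t ∈ Set.Ici t₀, HasDerivAt V (V' t) t)
    (hineq : ∀ t ∈ Set.Ici t₀, V' t ≤ -κ * Real.sqrt (V t)) :
    ∀ t, t₀ + 2 * Real.sqrt (V t₀) / κ ≤ t → V t = 0 := by
  intro t ht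
  have ht₀ : t₀ ≤ t := le_trans (le_add_of_nonneg_right (by positivity)) ht
  by_contra hne
  have hpos : 0 < V t := (hVnonneg t ht₀).lt_of_ne' hne
  have hcont : ContinuousOn V (Ici t₀) := fun s hs => (hderiv s hs).continuousAt.continuousWithinAt
  have hVanti : AntitoneOn V (Ici t₀) :=
    antitoneOn_of_hasDerivAt_le_neg_mul_sqrt (convex_Ici t₀) hκ.le hcont
      (fun s hs => hderiv s (interior_subset hs)) (fun s hs => hineq s (interior_subset hs))
  have hsqrt_anti := antitoneOn_sqrt_add_mul_of_hasDerivAt_le_neg_mul_sqrt (convex_Icc t₀ t)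
    (hcont.mono Icc_subset_Ici_self)
    (fun s hs => hderiv s (interior_subset hs).1)
    (fun s hs => hpos.trans_le (hVanti (interior_subset hs).1 ht₀ (interior_subset hs).2))
    (fun s hs => hineq s (interior_subset hs).1)
  have hdecay := hsqrt_anti (left_mem_Icc.2 ht₀) (right_mem_Icc.2 ht₀) ht₀
  have hstep : κ / 2 * (t₀ + 2 * √(V t₀) / κ) ≤ κ / 2 * t := by gcongr
  have hκt : κ / 2 * (t₀ + 2 * √(V t₀) / κ) = κ / 2 * t₀ + √(V t₀) := by field_simp
  linarith [Real.sqrt_pos.2 hpos]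

theorem finite_time_convergence (κ t₀ : ℝ) (hκ : 0 < κ) (V V' : ℝ → ℝ)
    (hVnonneg : ∀ t, t₀ ≤ t → 0 ≤ V t)
    (hderiv : ∀ t ∈ Set.Ici t₀, HasDerivAt V (V' t) t)
    (hcont : ContinuousOn V' (Set.Ici t₀))
    (hineq : ∀ t ∈ Set.Ici t₀, V' t ≤ -κ * Real.sqrt (V t)) :
    ∀ t, t₀ + 2 * Real.sqrt (V t₀) / κ ≤ t → V t = 0 :=
  finite_time_convergence_general κ t₀ hκ V V' hVnonneg hderiv hineq
end

section
/- Let γ > 0, 0 < ε < 2/3, θ > 0, and set V(x₁, x₂) = γ·|x₁| + ε·√|x₁|·sign(x₁)·x₂ + x₂²/2. Then there exists κ > 0 such that for all x₁, x₂ ∈ ℝ, (2/3 - ε)·θ·|x₂| + c·√|x₁| ≥ κ·√(V(x₁, x₂)) for any fixed c > 0 (with κ depending on γ, ε, θ, c). -/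
/-!
Write `a = √|x₁|` and `b = |x₂|`. Since `|sign x₁| ≤ 1`, the function under the square root is at
most `γ a² + ε a b + b²/2 ≤ A (a + b)²` with `A = γ + ε + 1/2`, so its square root is at most
`√A (a + b)`. The left-hand side of the claim is at least `min ((2/3 - ε) θ) c · (a + b)`, hence
`κ = min ((2/3 - ε) θ) c / √A` works.
-/

lemma Real.sign_mul_le_abs (r y : ℝ) : Real.sign r * y ≤ |y| := by
  rcases Real.sign_apply_eq r with h | h | h <;> rw [h]
  · simpa using neg_le_abs y
  · simp
  · simpa using le_abs_self y

lemma mul_sq_add_mul_add_sq_le {γ ε a b : ℝ} (hγ : 0 ≤ γ) (hε : 0 ≤ ε) (ha : 0 ≤ a)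
    (hb : 0 ≤ b) :
    γ * a ^ 2 + ε * a * b + b ^ 2 / 2 ≤ (γ + ε + 1 / 2) * (a + b) ^ 2 := by
  nlinarith [mul_nonneg hγ (mul_nonneg ha hb), mul_nonneg hγ (sq_nonneg b),
    mul_nonneg hε (sq_nonneg a), mul_nonneg hε (sq_nonneg b), mul_nonneg ha hb]

lemma lyapunov_le_mul_sq {γ ε : ℝ} (hγ : 0 ≤ γ) (hε : 0 ≤ ε) (x₁ x₂ : ℝ) :
    γ * |x₁| + ε * √|x₁| * Real.sign x₁ * x₂ + x₂ ^ 2 / 2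
      ≤ (γ + ε + 1 / 2) * (√|x₁| + |x₂|) ^ 2 := by
  have hsign : ε * √|x₁| * Real.sign x₁ * x₂ ≤ ε * √|x₁| * |x₂| := by
    rw [mul_assoc (ε * √|x₁|)]
    exact mul_le_mul_of_nonneg_left (Real.sign_mul_le_abs x₁ x₂) (by positivity)
  calc γ * |x₁| + ε * √|x₁| * Real.sign x₁ * x₂ + x₂ ^ 2 / 2
      ≤ γ * √|x₁| ^ 2 + ε * √|x₁| * |x₂| + |x₂| ^ 2 / 2 := by
        rw [Real.sq_sqrt (abs_nonneg x₁), sq_abs]; linarith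
    _ ≤ (γ + ε + 1 / 2) * (√|x₁| + |x₂|) ^ 2 :=
        mul_sq_add_mul_add_sq_le hγ hε (Real.sqrt_nonneg _) (abs_nonneg _)

lemma Real.sqrt_le_sqrt_mul_of_le_mul_sq {v A s : ℝ} (hA : 0 ≤ A) (hs : 0 ≤ s)
    (h : v ≤ A * s ^ 2) : √v ≤ √A * s := by
  simpa [Real.sqrt_mul hA, Real.sqrt_sq hs] using Real.sqrt_le_sqrt h

lemma min_mul_add_le {p c a b : ℝ} (ha : 0 ≤ a) (hb : 0 ≤ b) :
    min p c * (a + b) ≤ p * b + c * a := by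
  nlinarith [mul_le_mul_of_nonneg_right (min_le_left p c) hb,
    mul_le_mul_of_nonneg_right (min_le_right p c) ha]

theorem dissipation_dominates_sqrtV_general (γ ε θ c : ℝ) (hγ : 0 < γ) (hε₀ : 0 < ε)
    (hε₁ : ε < 2 / 3) (hθ : 0 < θ) (hc : 0 < c) :
    ∃ κ : ℝ, 0 < κ ∧ ∀ x₁ x₂ : ℝ,
      κ * Real.sqrt (γ * |x₁| + ε * Real.sqrt |x₁| * Real.sign x₁ * x₂ + x₂ ^ 2 / 2)
        ≤ (2 / 3 - ε) * θ * |x₂| + c * Real.sqrt |x₁| := by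
  set A := γ + ε + 1 / 2
  set m := min ((2 / 3 - ε) * θ) c
  have hA : 0 < √A := Real.sqrt_pos.2 (by positivity)
  have hm : 0 < m := lt_min (mul_pos (by linarith) hθ) hc
  refine ⟨m / √A, div_pos hm hA, fun x₁ x₂ => ?_⟩
  have hs : 0 ≤ √|x₁| + |x₂| := by positivity
  have hV := Real.sqrt_le_sqrt_mul_of_le_mul_sq (by positivity) hs
    (lyapunov_le_mul_sq hγ.le hε₀.le x₁ x₂)
  calc m / √A * √(γ * |x₁| + ε * √|x₁| * Real.sign x₁ * x₂ + x₂ ^ 2 / 2)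
      ≤ m / √A * (√A * (√|x₁| + |x₂|)) := by gcongr
    _ = m * (√|x₁| + |x₂|) := by field_simp
    _ ≤ (2 / 3 - ε) * θ * |x₂| + c * √|x₁| :=
        min_mul_add_le (Real.sqrt_nonneg _) (abs_nonneg _)

theorem dissipation_dominates_sqrtV (γ ε θ c : ℝ) (hγ : 0 < γ) (hε₀ : 0 < ε)
    (hε₁ : ε < 2 / 3) (hε₂ : ε ^ 2 < 2 * γ) (hθ : 0 < θ) (hc : 0 < c) :
    ∃ κ : ℝ, 0 < κ ∧ ∀ x₁ x₂ : ℝ,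
      κ * Real.sqrt (γ * |x₁| + ε * Real.sqrt |x₁| * Real.sign x₁ * x₂ + x₂ ^ 2 / 2)
        ≤ (2 / 3 - ε) * θ * |x₂| + c * Real.sqrt |x₁| :=
  dissipation_dominates_sqrtV_general γ ε θ c hγ hε₀ hε₁ hθ hc
end

section
/- Let z : [0, ∞) → ℝ be nonnegative and absolutely continuous, let m : [0, ∞) → ℝ≥0 be locally integrable, and suppose z'(t) ≤ m(t)·(2(D+γ) - z(t)) whenever z(t) > 0 (a.e.), with D ≥ 0, γ > 0. Then z(t) ≤ max{z(0), 2(D+γ)} for all t ≥ 0. -/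
/-!
Wherever `z` exceeds `2 (D + γ) > 0`, the differential inequality and `m ≥ 0` give `z' ≤ 0`, so `z`
cannot climb above the level `max (z 0) (2 (D + γ))`.
-/

open Set

theorem image_le_of_deriv_right_nonpos_of_lt {f f' : ℝ → ℝ} {a b B : ℝ}
    (hf : ContinuousOn f (Icc a b)) (hf' : ∀ x ∈ Ico a b, HasDerivWithinAt f (f' x) (Ici x) x)
    (ha : f a ≤ B) (bound : ∀ x ∈ Ico a b, B < f x → f' x ≤ 0) :
    ∀ ⦃x⦄, x ∈ Icc a b → f x ≤ B := by
  intro x hx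
  -- compare `f` with the strictly increasing barriers `B + ε (y - a + 1)` and let `ε → 0`
  have barrier : ∀ ε > 0, f x ≤ B + ε * (x - a + 1) := by
    intro ε hε
    refine image_le_of_deriv_right_lt_deriv_boundary hf hf'
      (B := fun y => B + ε * (y - a + 1)) (B' := fun _ => ε) (by simpa using ha.trans (by linarith))
      (fun y => (((hasDerivAt_id' y).sub_const a).add_const 1 |>.const_mul ε |>.const_add B)
        |>.congr_deriv (mul_one ε)) (fun y hy hfy => ?_) hx
    have hyB : B < f y := by
      rw [hfy]
      exact lt_add_of_pos_right B (mul_pos hε (by linarith [hy.1]))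
    exact (bound y hy hyB).trans_lt hε
  refine le_of_forall_pos_le_add fun δ hδ => ?_
  have hpos : 0 < x - a + 1 := by linarith [hx.1]
  simpa [div_mul_cancel₀ _ hpos.ne'] using barrier (δ / (x - a + 1)) (div_pos hδ hpos)

theorem z_boundedness_general (D γ : ℝ) (hD : 0 ≤ D) (hγ : 0 < γ) (z z' m : ℝ → ℝ)
    (hz : ∀ t ∈ Set.Ici (0 : ℝ), HasDerivAt z (z' t) t)
    (hm : ∀ t, 0 ≤ t → 0 ≤ m t)
    (hineq : ∀ t, 0 ≤ t → 0 < z t → z' t ≤ m t * (2 * (D + γ) - z t)) :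
    ∀ t, 0 ≤ t → z t ≤ max (z 0) (2 * (D + γ)) := by
  intro t ht
  have hM : 0 < 2 * (D + γ) := by positivity
  refine image_le_of_deriv_right_nonpos_of_lt (a := 0) (b := t) (f' := z')
    (fun x hx => (hz x hx.1).continuousAt.continuousWithinAt)
    (fun x hx => (hz x hx.1).hasDerivWithinAt) (le_max_left _ _) (fun x hx hzx => ?_) ⟨ht, le_rfl⟩
  have hMz : 2 * (D + γ) < z x := (le_max_right _ _).trans_lt hzx
  calc z' x ≤ m x * (2 * (D + γ) - z x) := hineq x hx.1 (hM.trans hMz)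
    _ ≤ 0 := mul_nonpos_of_nonneg_of_nonpos (hm x hx.1) (by linarith)

theorem z_boundedness (D γ : ℝ) (hD : 0 ≤ D) (hγ : 0 < γ) (z z' m : ℝ → ℝ)
    (hznn : ∀ t, 0 ≤ t → 0 ≤ z t)
    (hz : ∀ t ∈ Set.Ici (0 : ℝ), HasDerivAt z (z' t) t)
    (hm : ∀ t, 0 ≤ t → 0 ≤ m t)
    (hmloc : MeasureTheory.LocallyIntegrableOn m (Set.Ici 0))
    (hineq : ∀ t, 0 ≤ t → 0 < z t → z' t ≤ m t * (2 * (D + γ) - z t)) :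
    ∀ t, 0 ≤ t → z t ≤ max (z 0) (2 * (D + γ)) :=
  z_boundedness_general D γ hD hγ z z' m hz hm hineq
end
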